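/- Suppose that for every i ∈ {1,…,n} the number m_i := −2λ_i is a natural number belonging to {0, 1, …, k−1}, and let r = max_i m_i. Then the quantity N_k + N_{k−1} − 2·rank(T), where T : ℝ^{{α∈ℕⁿ : |α|=k}} → ℝ^{{β∈ℕⁿ : |β|=k−1}} is the linear map (T D)_β = Σ_{i=1}^n (β_i + 1)(β_i + 2λ_i) D_{β^i} (this quantity equals dim ker(T) + dim coker(T), and is the dimension of the first cohomology space of sl(2) with coefficients in the n-ary differential operators of resonance δ = k), satisfies C(n + k − 2, k) ≤ N_k + N_{k−1} − 2·rank(T) ≤ C(n + k − 2, k) + 2·C(n + k − r − 3, k − r − 1). -/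

import Mathlib

/-!
Since `N_k = N_{k-1} + C(n+k-2, k)` and `rank T ≤ N_{k-1}`, the lower bound is immediate and the
upper bound amounts to `N_{k-1} - rank T ≤ C(n+k-r-3, k-r-1)`. Pick `i₀` with `m_{i₀} = r`. Then
`T e_{β^{i₀}} = (β_{i₀}+1)(β_{i₀}-r) e_β + (multiples of e_γ with γ_{i₀} = β_{i₀}+1)`, so by
downward induction on `β_{i₀}` the range of `T` together with the `e_β` with `β_{i₀} = r` spans
everything. Those `β` are, after deleting the entry `i₀`, multi-indices in `n - 1` variables of
degree `k - 1 - r`, and stars and bars counts them.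
-/

open scoped BigOperators

noncomputable section

/-- For `|β| = k − 1`, the multi-index `β^i` (the `i`-th entry increased by `1`) has
`|β^i| = k`. -/
def upIdx (n k : ℕ) (hk : 1 ≤ k) (β : {β : Fin n → ℕ // ∑ i, β i = k - 1}) (i : Fin n) :
    {α : Fin n → ℕ // ∑ i, α i = k} :=
  ⟨Function.update β.1 i (β.1 i + 1), by
    have h1 : ∑ j, Function.update β.1 i (β.1 i + 1) j
        = (β.1 i + 1) + ∑ j ∈ Finset.univ.erase i, β.1 j := by
      rw [← Finset.add_sum_erase _ _ (Finset.mem_univ i), Function.update_self]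
      congr 1
      exact Finset.sum_congr rfl fun j hj =>
        Function.update_of_ne (Finset.mem_erase.1 hj).1 _ _
    have h2 : β.1 i + ∑ j ∈ Finset.univ.erase i, β.1 j = k - 1 := by
      rw [Finset.add_sum_erase _ _ (Finset.mem_univ i)]; exact β.2
    omega⟩

/-- The linear map `T : ℝ^{{|α|=k}} → ℝ^{{|β|=k−1}}`,
`(T D)_β = Σᵢ (βᵢ+1)(βᵢ+2λᵢ) D_{βⁱ}`. -/
def Tmap (n k : ℕ) (hk : 1 ≤ k) (lam : Fin n → ℝ) :
    ({α : Fin n → ℕ // ∑ i, α i = k} → ℝ) →ₗ[ℝ]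
      ({β : Fin n → ℕ // ∑ i, β i = k - 1} → ℝ) where
  toFun D := fun β => ∑ i, ((β.1 i : ℝ) + 1) * ((β.1 i : ℝ) + 2 * lam i)
    * D (upIdx n k hk β i)
  map_add' D E := by
    funext β
    simp only [Pi.add_apply, mul_add]
    rw [Finset.sum_add_distrib]
  map_smul' r D := by
    funext β
    simp only [Pi.smul_apply, smul_eq_mul, RingHom.id_apply]
    rw [Finset.mul_sum]
    exact Finset.sum_congr rfl fun i _ => by ring

open Module Submodule

abbrev MultiIndex (n d : ℕ) := {α : Fin n → ℕ // ∑ i, α i = d}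

instance (n d : ℕ) : Fintype (MultiIndex n d) :=
  Fintype.ofEquiv _ (Sym.equivNatSumOfFintype (Fin n) d)

namespace MultiIndex

theorem card_eq_choose (n d : ℕ) : Nat.card (MultiIndex n d) = (n + d - 1).choose d := by
  rw [← Nat.card_congr (Sym.equivNatSumOfFintype (Fin n) d), Nat.card_eq_fintype_card,
    Sym.card_sym_eq_choose, Fintype.card_fin]

theorem card_eq_card_pred_add_choose {n d : ℕ} (hn : 1 ≤ n) (hd : 1 ≤ d) :
    Nat.card (MultiIndex n d) = Nat.card (MultiIndex n (d - 1)) + (n + d - 2).choose d := by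
  obtain ⟨d, rfl⟩ : ∃ d', d = d' + 1 := ⟨d - 1, by omega⟩
  rw [card_eq_choose, card_eq_choose, Nat.add_sub_cancel,
    show n + (d + 1) - 1 = (n + d - 1) + 1 by omega, show n + (d + 1) - 2 = n + d - 1 by omega,
    Nat.choose_succ_succ']

theorem apply_le {n d : ℕ} (α : MultiIndex n d) (i : Fin n) : α.1 i ≤ d :=
  (Finset.single_le_sum (fun j _ => Nat.zero_le (α.1 j)) (Finset.mem_univ i)).trans_eq α.2

theorem card_apply_eq_le {n d : ℕ} (i : Fin (n + 1)) (r : ℕ) :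
    Nat.card {α : MultiIndex (n + 1) d // α.1 i = r} ≤ Nat.card (MultiIndex n (d - r)) := by
  refine Nat.card_le_card_of_injective (fun α => ⟨α.1.1 ∘ i.succAbove, ?_⟩) fun α β h => ?_
  · have hsplit := Fin.sum_univ_succAbove α.1.1 i
    have hsum := α.1.2
    have hαi := α.2
    simp only [Function.comp_apply]
    omega
  · refine Subtype.ext (Subtype.ext (funext fun j => ?_))
    induction j using Fin.succAboveCases i with
    | x => rw [α.2, β.2]
    | p j => exact congrFun (congrArg Subtype.val h) j

end MultiIndex

theorem Submodule.single_one_mem_of_mem {ι K : Type*} [Fintype ι] [DecidableEq ι]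
    [DivisionRing K] {M : Submodule K (ι → K)} {x : ι → K} {i : ι} (hx : x ∈ M) (hxi : x i ≠ 0)
    (h : ∀ j ≠ i, x j ≠ 0 → Pi.single j 1 ∈ M) : Pi.single i 1 ∈ M := by
  have single_mem : ∀ j ≠ i, Pi.single j (x j) ∈ M := fun j hj => by
    by_cases hxj : x j = 0
    · simp [hxj]
    · simpa [← Pi.single_smul'] using M.smul_mem (x j) (h j hj hxj)
  have hxi_mem : Pi.single i (x i) ∈ M := by
    rw [← Finset.univ_sum_single x, ← Finset.add_sum_erase _ _ (Finset.mem_univ i)] at hx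
    exact (M.add_mem_iff_left
      (M.sum_mem fun j hj => single_mem j (Finset.ne_of_mem_erase hj))).1 hx
  simpa [← Pi.single_smul', hxi] using M.smul_mem (x i)⁻¹ hxi_mem

section Tmap

variable {n k : ℕ} (hk : 1 ≤ k)

theorem upIdx_apply_self (β : MultiIndex n (k - 1)) (i : Fin n) :
    (upIdx n k hk β i).1 i = β.1 i + 1 := by
  simp [upIdx]

theorem upIdx_apply_of_ne (β : MultiIndex n (k - 1)) {i j : Fin n} (h : j ≠ i) :
    (upIdx n k hk β i).1 j = β.1 j := by
  simp [upIdx, h]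

theorem upIdx_left_injective (i : Fin n) : Function.Injective fun β => upIdx n k hk β i := by
  intro β γ h
  refine Subtype.ext (funext fun j => ?_)
  have := congrArg (fun α : MultiIndex n k => α.1 j) h
  by_cases hj : j = i
  · subst hj; simpa [upIdx_apply_self] using this
  · simpa [upIdx_apply_of_ne hk _ hj] using this

variable (lam : Fin n → ℝ)

theorem Tmap_single_apply (α : MultiIndex n k) (γ : MultiIndex n (k - 1)) :
    Tmap n k hk lam (Pi.single α 1) γ =
      ∑ i, if upIdx n k hk γ i = α then ((γ.1 i : ℝ) + 1) * (γ.1 i + 2 * lam i) else 0 := by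
  simp [Tmap, Pi.single_apply]

theorem Tmap_single_upIdx_apply_self (β : MultiIndex n (k - 1)) (i : Fin n) :
    Tmap n k hk lam (Pi.single (upIdx n k hk β i) 1) β =
      ((β.1 i : ℝ) + 1) * (β.1 i + 2 * lam i) := by
  rw [Tmap_single_apply, Finset.sum_eq_single i, if_pos rfl]
  · intro j _ hji
    rw [if_neg fun h => ?_]
    simpa [upIdx_apply_of_ne hk _ hji, upIdx_apply_self] using
      congrArg (fun α : MultiIndex n k => α.1 j) h
  · simp

theorem apply_eq_of_Tmap_single_upIdx_apply_ne_zero {β γ : MultiIndex n (k - 1)} {i : Fin n}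
    (hγ : γ ≠ β) (h : Tmap n k hk lam (Pi.single (upIdx n k hk β i) 1) γ ≠ 0) :
    γ.1 i = β.1 i + 1 := by
  rw [Tmap_single_apply] at h
  obtain ⟨j, -, hj⟩ := Finset.exists_ne_zero_of_sum_ne_zero h
  have hup : upIdx n k hk γ j = upIdx n k hk β i := by by_contra hne; simp [hne] at hj
  obtain rfl | hji := eq_or_ne j i
  · exact absurd (upIdx_left_injective hk j hup) hγ
  · rw [← upIdx_apply_of_ne hk γ (Ne.symm hji), hup, upIdx_apply_self]

end Tmap

def sliceSpan (n d : ℕ) (i₀ : Fin n) (r : ℕ) : Submodule ℝ (MultiIndex n d → ℝ) :=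
  span ℝ (Set.range fun β : {β : MultiIndex n d // β.1 i₀ = r} => Pi.single β.1 1)

theorem finrank_sliceSpan_le (n d : ℕ) (i₀ : Fin n) (r : ℕ) :
    finrank ℝ (sliceSpan n d i₀ r) ≤ Nat.card {β : MultiIndex n d // β.1 i₀ = r} :=
  (finrank_range_le_card _).trans_eq Nat.card_eq_fintype_card.symm

section Spanning

variable {n k : ℕ} (hk : 1 ≤ k) {lam : Fin n → ℝ} {i₀ : Fin n} {r : ℕ}

theorem single_mem_range_Tmap_sup_sliceSpan (hlam : 2 * lam i₀ = -(r : ℝ))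
    (β : MultiIndex n (k - 1)) :
    Pi.single β 1 ∈ LinearMap.range (Tmap n k hk lam) ⊔ sliceSpan n (k - 1) i₀ r := by
  by_cases hβ : β.1 i₀ = r
  · exact mem_sup_right (subset_span ⟨⟨β, hβ⟩, rfl⟩)
  refine single_one_mem_of_mem
    (mem_sup_left (LinearMap.mem_range_self _ (Pi.single (upIdx n k hk β i₀) 1))) ?_
    fun γ hγ hTγ => ?_
  · rw [Tmap_single_upIdx_apply_self, hlam]
    have : (β.1 i₀ : ℝ) ≠ r := by exact_mod_cast hβ
    exact mul_ne_zero (by positivity) (sub_ne_zero.2 this)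
  · -- `hγi₀` and `hγ_le` are what makes the measure `k - 1 - β i₀` drop
    have hγi₀ := apply_eq_of_Tmap_single_upIdx_apply_ne_zero hk lam hγ hTγ
    have hγ_le := MultiIndex.apply_le γ i₀
    exact single_mem_range_Tmap_sup_sliceSpan hlam γ
termination_by k - 1 - β.1 i₀

theorem range_Tmap_sup_sliceSpan_eq_top (hlam : 2 * lam i₀ = -(r : ℝ)) :
    LinearMap.range (Tmap n k hk lam) ⊔ sliceSpan n (k - 1) i₀ r = ⊤ := by
  rw [eq_top_iff, ← (Pi.basisFun ℝ _).span_eq, span_le]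
  rintro _ ⟨β, rfl⟩
  rw [Pi.basisFun_apply]
  exact single_mem_range_Tmap_sup_sliceSpan hk hlam β

theorem card_le_finrank_range_Tmap_add (hlam : 2 * lam i₀ = -(r : ℝ)) :
    Nat.card (MultiIndex n (k - 1)) ≤
      finrank ℝ (LinearMap.range (Tmap n k hk lam)) +
        Nat.card {β : MultiIndex n (k - 1) // β.1 i₀ = r} :=
  calc Nat.card (MultiIndex n (k - 1))
      = finrank ℝ ↥(LinearMap.range (Tmap n k hk lam) ⊔ sliceSpan n (k - 1) i₀ r) := by
        rw [range_Tmap_sup_sliceSpan_eq_top hk hlam, finrank_top, finrank_fintype_fun_eq_card,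
          Nat.card_eq_fintype_card]
    _ ≤ _ := finrank_add_le_finrank_add_finrank _ _
    _ ≤ _ := Nat.add_le_add_left (finrank_sliceSpan_le ..) _

end Spanning

theorem finrank_range_Tmap_le {n k : ℕ} (hk : 1 ≤ k) (lam : Fin n → ℝ) :
    finrank ℝ (LinearMap.range (Tmap n k hk lam)) ≤ Nat.card (MultiIndex n (k - 1)) := by
  rw [Nat.card_eq_fintype_card, ← finrank_fintype_fun_eq_card ℝ]
  exact Submodule.finrank_le _

/-- Theorem 2.6: if every `mᵢ := −2λᵢ` is a natural number in
`{0,…,k−1}` and `r = maxᵢ mᵢ`, then the dimension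
`N_k + N_{k−1} − 2·rank T = dim ker T + dim coker T` of `H¹(sl(2), D_{λ,μ})` (for
`δ = k`) satisfies
`C(n+k−2, k) ≤ N_k + N_{k−1} − 2·rank T ≤ C(n+k−2, k) + 2·C(n+k−r−3, k−r−1)`. -/
theorem cohomology_dim_bounds (n k : ℕ) (hn : 1 ≤ n) (hk : 1 ≤ k) (lam : Fin n → ℝ)
    (m : Fin n → ℕ) (hm : ∀ i, (m i : ℝ) = -(2 * lam i) ∧ m i < k)
    (r : ℕ) (hr : r = Finset.univ.sup m) :
    Nat.choose (n + k - 2) k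
      ≤ Nat.card {α : Fin n → ℕ // ∑ i, α i = k}
          + Nat.card {β : Fin n → ℕ // ∑ i, β i = k - 1}
          - 2 * Module.finrank ℝ (LinearMap.range (Tmap n k hk lam)) ∧
    Nat.card {α : Fin n → ℕ // ∑ i, α i = k}
        + Nat.card {β : Fin n → ℕ // ∑ i, β i = k - 1}
        - 2 * Module.finrank ℝ (LinearMap.range (Tmap n k hk lam))
      ≤ Nat.choose (n + k - 2) k + 2 * Nat.choose (n + k - r - 3) (k - r - 1) := by
  obtain ⟨n, rfl⟩ : ∃ n', n = n' + 1 := ⟨n - 1, by omega⟩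
  obtain ⟨i₀, -, hi₀⟩ := Finset.univ.exists_mem_eq_sup Finset.univ_nonempty m
  have hrk : r < k := hr ▸ hi₀ ▸ (hm i₀).2
  have hlam : 2 * lam i₀ = -(r : ℝ) := by rw [hr, hi₀, (hm i₀).1, neg_neg]
  have hslice : Nat.card {β : MultiIndex (n + 1) (k - 1) // β.1 i₀ = r} ≤
      (n + 1 + k - r - 3).choose (k - r - 1) := by
    refine (MultiIndex.card_apply_eq_le i₀ r).trans_eq ?_
    rw [MultiIndex.card_eq_choose, show n + (k - 1 - r) - 1 = n + 1 + k - r - 3 by omega,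
      show k - 1 - r = k - r - 1 by omega]
  have hcard := MultiIndex.card_eq_card_pred_add_choose hn hk
  have hrank := finrank_range_Tmap_le hk lam
  have hcoker := (card_le_finrank_range_Tmap_add hk hlam).trans (Nat.add_le_add_left hslice _)
  dsimp only [MultiIndex] at hcard hrank hcoker
  omega
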